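/- arXiv:quant-ph/0612004 — 4 statements merged into one kernel-verified Lean document; each statement's English description precedes it below -/
import Mathlib

section
/- A probability distribution pr on {0,1,…,m}^n lies in the convex hull of the (m+1)^n product distributions {D_w : w ∈ {0,1,…,m}^n} if and only if for every string x ∈ {0,1,…,m}^n the inequality ∑_{y ⪯ x} (−1)^{|y|−|x|} · pr[{z ⪯ y}] / D_y[{z ⪯ y}] ≥ 0 holds. -/
open Finset

/-- The weight `|w|` of a string: the number of nonzero coordinates. -/
def strWt {m n : ℕ} (w : Fin n → Fin (m + 1)) : ℕ :=
  (Finset.univ.filter fun j => w j ≠ 0).card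

noncomputable def prodDist {m n : ℕ} (q : Fin n → Fin (m + 1) → ℝ)
    (w : Fin n → Fin (m + 1)) : (Fin n → Fin (m + 1)) → ℝ := fun z =>
  ∏ j, if w j = 0 then (if z j = 0 then (1 : ℝ) else 0)
    else if z j = w j then q j (w j) else if z j = 0 then 1 - q j (w j) else 0

noncomputable def cumul {m n : ℕ} (p : (Fin n → Fin (m + 1)) → ℝ)
    (y : Fin n → Fin (m + 1)) : ℝ :=
  ∑ z ∈ Finset.univ.filter (fun z => ∀ j, y j = 0 ∨ y j = z j), p z

namespace GML

variable {m n : ℕ}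

abbrev Str (m n : ℕ) := Fin n → Fin (m + 1)

abbrev sle (x y : Str m n) : Prop := ∀ j, x j = 0 ∨ x j = y j

lemma sle_refl (x : Str m n) : sle x x := fun _ => Or.inr rfl

lemma sle_zero (y : Str m n) : sle (fun _ => 0) y := fun _ => Or.inl rfl

lemma strWt_sub (x y : Str m n) (h : sle x y) :
    strWt y - strWt x = (Finset.univ.filter fun j => x j = 0 ∧ y j ≠ 0).card := by
  have h1 := Finset.card_filter_add_card_filter_not
    (s := Finset.univ.filter fun j => y j ≠ 0) (p := fun j => x j ≠ 0)
  rw [Finset.filter_filter, Finset.filter_filter] at h1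
  have e1 : (Finset.univ.filter fun j => y j ≠ 0 ∧ x j ≠ 0)
      = Finset.univ.filter fun j => x j ≠ 0 := by
    refine Finset.filter_congr fun j _ => ?_
    constructor
    · exact And.right
    · intro hx
      refine ⟨?_, hx⟩
      rcases h j with h0 | h0
      · exact absurd h0 hx
      · rw [← h0]; exact hx
  have e2 : (Finset.univ.filter fun j => y j ≠ 0 ∧ ¬ x j ≠ 0)
      = Finset.univ.filter fun j => x j = 0 ∧ y j ≠ 0 := by
    refine Finset.filter_congr fun j _ => ?_
    constructor
    · rintro ⟨hy, hx⟩
      exact ⟨not_not.mp hx, hy⟩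
    · rintro ⟨hx, hy⟩
      exact ⟨hy, not_not.mpr hx⟩
  rw [e1, e2] at h1
  unfold strWt
  omega

lemma sgn_eq_prod (x y : Str m n) (h : sle x y) :
    (-1 : ℝ) ^ (strWt y - strWt x) = ∏ j, (if x j = 0 ∧ y j ≠ 0 then (-1 : ℝ) else 1) := by
  rw [strWt_sub x y h, ← Finset.prod_const, Finset.prod_filter]

/-- Key Möbius identity, first form. -/
lemma keyK (x w : Str m n) :
    ∑ y : Str m n, (if sle x y then (-1 : ℝ) ^ (strWt y - strWt x) else 0) *
      (if sle y w then (1 : ℝ) else 0) = if w = x then 1 else 0 := by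
  have hsum : ∀ y : Str m n,
      (if sle x y then (-1 : ℝ) ^ (strWt y - strWt x) else 0) *
        (if sle y w then (1 : ℝ) else 0)
      = ∏ j, ((if x j = 0 ∨ x j = y j then (1 : ℝ) else 0) *
          ((if x j = 0 ∧ y j ≠ 0 then (-1 : ℝ) else 1) *
            (if y j = 0 ∨ y j = w j then (1 : ℝ) else 0))) := by
    intro y
    by_cases h1 : sle x y
    · by_cases h2 : sle y w
      · rw [if_pos h1, if_pos h2, sgn_eq_prod x y h1, Finset.prod_mul_distrib,
          Finset.prod_mul_distrib]
        have e1 : ∏ j, (if x j = 0 ∨ x j = y j then (1 : ℝ) else 0) = 1 :=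
          Finset.prod_eq_one fun j _ => if_pos (h1 j)
        have e2 : ∏ j, (if y j = 0 ∨ y j = w j then (1 : ℝ) else 0) = 1 :=
          Finset.prod_eq_one fun j _ => if_pos (h2 j)
        rw [e1, e2]; ring
      · rw [if_neg h2, mul_zero]
        obtain ⟨j, hj⟩ := not_forall.mp h2
        refine (Finset.prod_eq_zero (Finset.mem_univ j) ?_).symm
        rw [if_neg hj]; ring
    · rw [if_neg h1, zero_mul]
      obtain ⟨j, hj⟩ := not_forall.mp h1
      refine (Finset.prod_eq_zero (Finset.mem_univ j) ?_).symm
      rw [if_neg hj]; ring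
  have hps := Finset.prod_univ_sum (fun _ : Fin n => (Finset.univ : Finset (Fin (m + 1))))
    (fun j a => (if x j = 0 ∨ x j = a then (1 : ℝ) else 0) *
      ((if x j = 0 ∧ a ≠ 0 then (-1 : ℝ) else 1) *
        (if a = 0 ∨ a = w j then (1 : ℝ) else 0)))
  rw [Fintype.piFinset_univ] at hps
  rw [Finset.sum_congr rfl fun y _ => hsum y, ← hps]
  have percoord : ∀ j : Fin n,
      (∑ a : Fin (m + 1), ((if x j = 0 ∨ x j = a then (1 : ℝ) else 0) *
        ((if x j = 0 ∧ a ≠ 0 then (-1 : ℝ) else 1) *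
          (if a = 0 ∨ a = w j then (1 : ℝ) else 0))))
      = if w j = x j then 1 else 0 := by
    intro j
    by_cases hx : x j = 0
    · have hterm : ∀ a : Fin (m + 1),
          ((if x j = 0 ∨ x j = a then (1 : ℝ) else 0) *
            ((if x j = 0 ∧ a ≠ 0 then (-1 : ℝ) else 1) *
              (if a = 0 ∨ a = w j then (1 : ℝ) else 0)))
          = (if a = 0 then (1 : ℝ) else 0) + (if a = w j ∧ w j ≠ 0 then (-1 : ℝ) else 0) := by
        intro a
        by_cases ha : a = 0
        · simp [ha, hx, eq_comm]
        · by_cases haw : a = w j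
          · have hw : w j ≠ 0 := by rw [← haw]; exact ha
            simp [ha, haw, hx, hw]
          · simp [ha, haw, hx]
      rw [Finset.sum_congr rfl fun a _ => hterm a, Finset.sum_add_distrib]
      by_cases hw : w j = 0
      · have hwx : w j = x j := by rw [hx, hw]
        rw [if_pos hwx]
        have ea : ∀ a : Fin (m+1), (if a = w j ∧ w j ≠ 0 then (-1 : ℝ) else 0) = 0 := by
          intro a
          have : ¬ (a = w j ∧ w j ≠ 0) := fun hh => hh.2 hw
          rw [if_neg this]
        rw [Finset.sum_congr rfl fun a _ => ea a, Finset.sum_const_zero, add_zero,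
          Finset.sum_ite_eq' Finset.univ (0 : Fin (m + 1)) (fun _ => (1 : ℝ)),
          if_pos (Finset.mem_univ _)]
      · have : ∀ a : Fin (m+1), (if a = w j ∧ w j ≠ 0 then (-1 : ℝ) else 0)
            = if a = w j then (-1 : ℝ) else 0 := by
          intro a; by_cases h : a = w j <;> simp [h, hw]
        rw [Finset.sum_congr rfl fun a _ => this a]
        have hwx : ¬ (w j = x j) := by rw [hx]; exact hw
        rw [if_neg hwx,
          Finset.sum_ite_eq' Finset.univ (0 : Fin (m + 1)) (fun _ => (1 : ℝ)),
          Finset.sum_ite_eq' Finset.univ (w j) (fun _ => (-1 : ℝ)),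
          if_pos (Finset.mem_univ _), if_pos (Finset.mem_univ _)]
        ring
    · rw [Finset.sum_eq_single (x j)]
      · have h2 : ¬ (x j = 0 ∧ x j ≠ 0) := fun h => h.2 h.1
        by_cases hxw : x j = w j
        · have hwx : w j = x j := hxw.symm
          rw [if_pos (Or.inr rfl), if_neg h2, if_pos (Or.inr hxw), if_pos hwx]
          ring
        · have hwx : ¬ (w j = x j) := fun h => hxw h.symm
          have h3 : ¬ (x j = 0 ∨ x j = w j) := by
            rintro (h | h)
            · exact hx h
            · exact hxw h
          rw [if_pos (Or.inr rfl), if_neg h2, if_neg h3, if_neg hwx]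
          ring
      · intro a _ ha
        have : ¬ (x j = 0 ∨ x j = a) := by
          rintro (h | h)
          · exact hx h
          · exact ha h.symm
        rw [if_neg this, zero_mul]
      · intro h; exact absurd (Finset.mem_univ _) h
  rw [Finset.prod_congr rfl fun j _ => percoord j]
  by_cases hwx : w = x
  · rw [if_pos hwx]
    exact Finset.prod_eq_one fun j _ => if_pos (by rw [hwx])
  · rw [if_neg hwx]
    obtain ⟨j, hj⟩ := Function.ne_iff.mp hwx
    exact Finset.prod_eq_zero (Finset.mem_univ j) (if_neg hj)

/-- Key Möbius identity, second form. -/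
lemma keyK' (x w : Str m n) :
    ∑ y : Str m n, (if sle x y then (1 : ℝ) else 0) *
      (if sle y w then (-1 : ℝ) ^ (strWt w - strWt y) else 0) = if w = x then 1 else 0 := by
  have hsum : ∀ y : Str m n,
      (if sle x y then (1 : ℝ) else 0) *
        (if sle y w then (-1 : ℝ) ^ (strWt w - strWt y) else 0)
      = ∏ j, ((if x j = 0 ∨ x j = y j then (1 : ℝ) else 0) *
          ((if y j = 0 ∧ w j ≠ 0 then (-1 : ℝ) else 1) *
            (if y j = 0 ∨ y j = w j then (1 : ℝ) else 0))) := by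
    intro y
    by_cases h1 : sle x y
    · by_cases h2 : sle y w
      · rw [if_pos h1, if_pos h2, sgn_eq_prod y w h2, Finset.prod_mul_distrib,
          Finset.prod_mul_distrib]
        have e1 : ∏ j, (if x j = 0 ∨ x j = y j then (1 : ℝ) else 0) = 1 :=
          Finset.prod_eq_one fun j _ => if_pos (h1 j)
        have e2 : ∏ j, (if y j = 0 ∨ y j = w j then (1 : ℝ) else 0) = 1 :=
          Finset.prod_eq_one fun j _ => if_pos (h2 j)
        rw [e1, e2]; ring
      · rw [if_neg h2, mul_zero]
        obtain ⟨j, hj⟩ := not_forall.mp h2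
        refine (Finset.prod_eq_zero (Finset.mem_univ j) ?_).symm
        rw [if_neg hj]; ring
    · rw [if_neg h1, zero_mul]
      obtain ⟨j, hj⟩ := not_forall.mp h1
      refine (Finset.prod_eq_zero (Finset.mem_univ j) ?_).symm
      rw [if_neg hj]; ring
  have hps := Finset.prod_univ_sum (fun _ : Fin n => (Finset.univ : Finset (Fin (m + 1))))
    (fun j a => (if x j = 0 ∨ x j = a then (1 : ℝ) else 0) *
      ((if a = 0 ∧ w j ≠ 0 then (-1 : ℝ) else 1) *
        (if a = 0 ∨ a = w j then (1 : ℝ) else 0)))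
  rw [Fintype.piFinset_univ] at hps
  rw [Finset.sum_congr rfl fun y _ => hsum y, ← hps]
  have percoord : ∀ j : Fin n,
      (∑ a : Fin (m + 1), ((if x j = 0 ∨ x j = a then (1 : ℝ) else 0) *
        ((if a = 0 ∧ w j ≠ 0 then (-1 : ℝ) else 1) *
          (if a = 0 ∨ a = w j then (1 : ℝ) else 0))))
      = if w j = x j then 1 else 0 := by
    intro j
    by_cases hx : x j = 0
    · have hterm : ∀ a : Fin (m + 1),
          ((if x j = 0 ∨ x j = a then (1 : ℝ) else 0) *
            ((if a = 0 ∧ w j ≠ 0 then (-1 : ℝ) else 1) *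
              (if a = 0 ∨ a = w j then (1 : ℝ) else 0)))
          = (if a = 0 ∧ w j ≠ 0 then (-1 : ℝ) else 0)
            + (if a = 0 ∧ w j = 0 then (1 : ℝ) else 0)
            + (if a = w j ∧ w j ≠ 0 then (1 : ℝ) else 0) := by
        intro a
        by_cases ha : a = 0
        · by_cases hw : w j = 0
          · simp [ha, hx, hw, eq_comm]
          · simp [ha, hx, hw, eq_comm]
        · by_cases haw : a = w j
          · have hw : w j ≠ 0 := by rw [← haw]; exact ha
            simp [ha, haw, hx, hw]
          · simp [ha, haw, hx]
      rw [Finset.sum_congr rfl fun a _ => hterm a, Finset.sum_add_distrib,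
        Finset.sum_add_distrib]
      by_cases hw : w j = 0
      · have hwx : w j = x j := by rw [hx, hw]
        rw [if_pos hwx]
        have ea : ∀ a : Fin (m+1), (if a = 0 ∧ w j ≠ 0 then (-1 : ℝ) else 0) = 0 :=
          fun a => if_neg fun hh => hh.2 hw
        have eb : ∀ a : Fin (m+1), (if a = 0 ∧ w j = 0 then (1 : ℝ) else 0)
            = if a = 0 then (1 : ℝ) else 0 := by
          intro a; by_cases h : a = 0 <;> simp [h, hw]
        have ec : ∀ a : Fin (m+1), (if a = w j ∧ w j ≠ 0 then (1 : ℝ) else 0) = 0 :=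
          fun a => if_neg fun hh => hh.2 hw
        rw [Finset.sum_congr rfl fun a _ => ea a, Finset.sum_congr rfl fun a _ => eb a,
          Finset.sum_congr rfl fun a _ => ec a]
        simp [Finset.sum_ite_eq']
      · have hwx : ¬ (w j = x j) := by rw [hx]; exact hw
        rw [if_neg hwx]
        have e1 : ∀ a : Fin (m+1), (if a = 0 ∧ w j ≠ 0 then (-1 : ℝ) else 0)
            = if a = 0 then (-1 : ℝ) else 0 := by
          intro a; by_cases h : a = 0 <;> simp [h, hw]
        have eb : ∀ a : Fin (m+1), (if a = 0 ∧ w j = 0 then (1 : ℝ) else 0) = 0 :=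
          fun a => if_neg fun hh => hw hh.2
        have e3 : ∀ a : Fin (m+1), (if a = w j ∧ w j ≠ 0 then (1 : ℝ) else 0)
            = if a = w j then (1 : ℝ) else 0 := by
          intro a; by_cases h : a = w j <;> simp [h, hw]
        rw [Finset.sum_congr rfl fun a _ => e1 a, Finset.sum_congr rfl fun a _ => eb a,
          Finset.sum_congr rfl fun a _ => e3 a]
        simp [Finset.sum_ite_eq']
    · rw [Finset.sum_eq_single (x j)]
      · have h2 : ¬ (x j = 0 ∧ w j ≠ 0) := fun h => hx h.1
        by_cases hxw : x j = w j
        · have hwx : w j = x j := hxw.symm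
          rw [if_pos (Or.inr rfl), if_neg h2, if_pos (Or.inr hxw), if_pos hwx]
          ring
        · have hwx : ¬ (w j = x j) := fun h => hxw h.symm
          have h3 : ¬ (x j = 0 ∨ x j = w j) := by
            rintro (h | h)
            · exact hx h
            · exact hxw h
          rw [if_pos (Or.inr rfl), if_neg h2, if_neg h3, if_neg hwx]
          ring
      · intro a _ ha
        have : ¬ (x j = 0 ∨ x j = a) := by
          rintro (h | h)
          · exact hx h
          · exact ha h.symm
        rw [if_neg this, zero_mul]
      · intro h; exact absurd (Finset.mem_univ _) h
  rw [Finset.prod_congr rfl fun j _ => percoord j]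
  by_cases hwx : w = x
  · rw [if_pos hwx]
    exact Finset.prod_eq_one fun j _ => if_pos (by rw [hwx])
  · rw [if_neg hwx]
    obtain ⟨j, hj⟩ := Function.ne_iff.mp hwx
    exact Finset.prod_eq_zero (Finset.mem_univ j) (if_neg hj)

lemma cumul_eq (p : Str m n → ℝ) (y : Str m n) :
    cumul p y = ∑ z : Str m n, (if sle y z then (1 : ℝ) else 0) * p z := by
  unfold cumul
  rw [Finset.sum_filter]
  refine Finset.sum_congr rfl fun z _ => ?_
  by_cases h : sle y z
  · rw [if_pos h, if_pos h, one_mul]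
  · rw [if_neg h, if_neg h, zero_mul]

/-- Möbius inversion: recover `f` from its cumulative sums. -/
lemma inv_formula (f : Str m n → ℝ) (x : Str m n) :
    ∑ y : Str m n, (if sle x y then (-1 : ℝ) ^ (strWt y - strWt x) else 0) * cumul f y
      = f x := by
  have : ∀ y : Str m n, (if sle x y then (-1 : ℝ) ^ (strWt y - strWt x) else 0) * cumul f y
      = ∑ z : Str m n, ((if sle x y then (-1 : ℝ) ^ (strWt y - strWt x) else 0) *
        (if sle y z then (1 : ℝ) else 0)) * f z := by
    intro y
    rw [cumul_eq, Finset.mul_sum]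
    exact Finset.sum_congr rfl fun z _ => by ring
  rw [Finset.sum_congr rfl fun y _ => this y, Finset.sum_comm]
  have : ∀ z : Str m n,
      (∑ y : Str m n, ((if sle x y then (-1 : ℝ) ^ (strWt y - strWt x) else 0) *
        (if sle y z then (1 : ℝ) else 0)) * f z) = (if z = x then (1 : ℝ) else 0) * f z := by
    intro z
    rw [← Finset.sum_mul, keyK x z]
  rw [Finset.sum_congr rfl fun z _ => this z]
  have : ∀ z : Str m n, (if z = x then (1 : ℝ) else 0) * f z
      = if z = x then f z else 0 := by
    intro z; by_cases h : z = x
    · rw [if_pos h, if_pos h, one_mul]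
    · rw [if_neg h, if_neg h, zero_mul]
  rw [Finset.sum_congr rfl fun z _ => this z, Finset.sum_ite_eq' Finset.univ x f,
    if_pos (Finset.mem_univ x)]

/-- Second inversion: summing the Möbius transform over `w ⪰ x` gives back `F x`. -/
lemma sum_c_formula (F : Str m n → ℝ) (x : Str m n) :
    ∑ w : Str m n, (if sle x w then (1 : ℝ) else 0) *
      (∑ v : Str m n, (if sle w v then (-1 : ℝ) ^ (strWt v - strWt w) else 0) * F v)
      = F x := by
  have : ∀ w : Str m n, (if sle x w then (1 : ℝ) else 0) *
      (∑ v : Str m n, (if sle w v then (-1 : ℝ) ^ (strWt v - strWt w) else 0) * F v)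
      = ∑ v : Str m n, ((if sle x w then (1 : ℝ) else 0) *
        (if sle w v then (-1 : ℝ) ^ (strWt v - strWt w) else 0)) * F v := by
    intro w
    rw [Finset.mul_sum]
    exact Finset.sum_congr rfl fun v _ => by ring
  rw [Finset.sum_congr rfl fun w _ => this w, Finset.sum_comm]
  have : ∀ v : Str m n,
      (∑ w : Str m n, ((if sle x w then (1 : ℝ) else 0) *
        (if sle w v then (-1 : ℝ) ^ (strWt v - strWt w) else 0)) * F v)
      = (if v = x then (1 : ℝ) else 0) * F v := by
    intro v
    rw [← Finset.sum_mul, keyK' x v]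
  rw [Finset.sum_congr rfl fun v _ => this v]
  have : ∀ v : Str m n, (if v = x then (1 : ℝ) else 0) * F v
      = if v = x then F v else 0 := by
    intro v; by_cases h : v = x
    · rw [if_pos h, if_pos h, one_mul]
    · rw [if_neg h, if_neg h, zero_mul]
  rw [Finset.sum_congr rfl fun v _ => this v, Finset.sum_ite_eq' Finset.univ x F,
    if_pos (Finset.mem_univ x)]

noncomputable def Qprod (q : Fin n → Fin (m + 1) → ℝ) (y : Str m n) : ℝ :=
  ∏ j, (if y j = 0 then (1 : ℝ) else q j (y j))

lemma cumul_prodDist (q : Fin n → Fin (m + 1) → ℝ) (w y : Str m n) :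
    cumul (prodDist q w) y = (if sle y w then (1 : ℝ) else 0) * Qprod q y := by
  rw [cumul_eq]
  have hterm : ∀ z : Str m n, (if sle y z then (1 : ℝ) else 0) * prodDist q w z
      = ∏ j, ((if y j = 0 ∨ y j = z j then (1 : ℝ) else 0) *
          (if w j = 0 then (if z j = 0 then (1 : ℝ) else 0)
            else if z j = w j then q j (w j) else if z j = 0 then 1 - q j (w j) else 0)) := by
    intro z
    have hind : (if sle y z then (1 : ℝ) else 0)
        = ∏ j, (if y j = 0 ∨ y j = z j then (1 : ℝ) else 0) := by
      by_cases h : sle y z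
      · rw [if_pos h]
        exact (Finset.prod_eq_one fun j _ => if_pos (h j)).symm
      · rw [if_neg h]
        obtain ⟨j, hj⟩ := not_forall.mp h
        refine (Finset.prod_eq_zero (Finset.mem_univ j) ?_).symm
        rw [if_neg hj]
    rw [hind]
    unfold prodDist
    rw [← Finset.prod_mul_distrib]
  have hps := Finset.prod_univ_sum (fun _ : Fin n => (Finset.univ : Finset (Fin (m + 1))))
    (fun j a => (if y j = 0 ∨ y j = a then (1 : ℝ) else 0) *
      (if w j = 0 then (if a = 0 then (1 : ℝ) else 0)
        else if a = w j then q j (w j) else if a = 0 then 1 - q j (w j) else 0))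
  rw [Fintype.piFinset_univ] at hps
  rw [Finset.sum_congr rfl fun z _ => hterm z, ← hps]
  have percoord : ∀ j : Fin n,
      (∑ a : Fin (m + 1), ((if y j = 0 ∨ y j = a then (1 : ℝ) else 0) *
        (if w j = 0 then (if a = 0 then (1 : ℝ) else 0)
          else if a = w j then q j (w j) else if a = 0 then 1 - q j (w j) else 0)))
      = if y j = 0 then (1 : ℝ) else if y j = w j then q j (y j) else 0 := by
    intro j
    by_cases hy : y j = 0
    · have hone : ∀ a : Fin (m + 1), (if y j = 0 ∨ y j = a then (1 : ℝ) else 0) = 1 :=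
        fun a => if_pos (Or.inl hy)
      by_cases hw : w j = 0
      · simp only [hone, one_mul, hw, if_pos, hy]
        simp [Finset.sum_ite_eq']
      · have hterm2 : ∀ a : Fin (m + 1),
            ((if y j = 0 ∨ y j = a then (1 : ℝ) else 0) *
              (if w j = 0 then (if a = 0 then (1 : ℝ) else 0)
                else if a = w j then q j (w j) else if a = 0 then 1 - q j (w j) else 0))
            = (if a = w j then q j (w j) else 0) + (if a = 0 then 1 - q j (w j) else 0) := by
          intro a
          rw [hone, one_mul, if_neg hw]
          by_cases haw : a = w j
          · have ha : a ≠ 0 := by rw [haw]; exact hw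
            rw [if_pos haw, if_pos haw, if_neg ha, add_zero]
          · rw [if_neg haw, if_neg haw, zero_add]
        rw [Finset.sum_congr rfl fun a _ => hterm2 a, Finset.sum_add_distrib]
        rw [Finset.sum_ite_eq' Finset.univ (w j) (fun _ => q j (w j)),
          Finset.sum_ite_eq' Finset.univ (0 : Fin (m + 1)) (fun _ => 1 - q j (w j))]
        rw [if_pos (Finset.mem_univ _), if_pos (Finset.mem_univ _), if_pos hy]
        ring
    · rw [Finset.sum_eq_single (y j)]
      · rw [if_pos (Or.inr rfl), one_mul, if_neg hy]
        by_cases hw : w j = 0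
        · have hyw : ¬ (y j = w j) := by rw [hw]; exact hy
          rw [if_pos hw, if_neg hy, if_neg hyw]
        · rw [if_neg hw]
          by_cases hyw : y j = w j
          · rw [if_pos hyw, if_pos hyw, hyw, if_neg hw]
          · rw [if_neg hyw, if_neg hyw, if_neg hy, if_neg hy]
      · intro a _ ha
        have : ¬ (y j = 0 ∨ y j = a) := by
          rintro (h | h)
          · exact hy h
          · exact ha h.symm
        rw [if_neg this, zero_mul]
      · intro h; exact absurd (Finset.mem_univ _) h
  rw [Finset.prod_congr rfl fun j _ => percoord j]
  unfold Qprod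
  by_cases h : sle y w
  · rw [if_pos h, one_mul]
    refine Finset.prod_congr rfl fun j _ => ?_
    rcases h j with h0 | h0
    · rw [if_pos h0, if_pos h0]
    · by_cases hy : y j = 0
      · rw [if_pos hy, if_pos hy]
      · rw [if_neg hy, if_neg hy, if_pos h0]
  · rw [if_neg h, zero_mul]
    obtain ⟨j, hj⟩ := not_forall.mp h
    push_neg at hj
    refine Finset.prod_eq_zero (Finset.mem_univ j) ?_
    rw [if_neg hj.1, if_neg hj.2]

lemma Qprod_pos (q : Fin n → Fin (m + 1) → ℝ)
    (hq : ∀ (j : Fin n) (i : Fin (m + 1)), i ≠ 0 → 0 < q j i ∧ q j i ≤ 1)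
    (y : Str m n) : 0 < Qprod q y := by
  refine Finset.prod_pos fun j _ => ?_
  by_cases h : y j = 0
  · rw [if_pos h]; exact one_pos
  · rw [if_neg h]; exact (hq j _ h).1

lemma Qprod_zero (q : Fin n → Fin (m + 1) → ℝ) :
    Qprod q (fun _ => (0 : Fin (m + 1))) = 1 :=
  Finset.prod_eq_one fun j _ => if_pos rfl

lemma cumul_zero_str (p : Str m n → ℝ) :
    cumul p (fun _ => (0 : Fin (m + 1))) = ∑ z : Str m n, p z := by
  rw [cumul_eq]
  exact Finset.sum_congr rfl fun z _ => by rw [if_pos (sle_zero z), one_mul]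

end GML

open GML
/-- Generalized Mixing Lemma (both directions): a probability distribution `pr` on
`{0,1,…,m}ⁿ` lies in the convex hull of the `(m+1)ⁿ` product distributions `D_w`
iff for every string `x`, `∑_{y ⪯ x} (−1)^{|y|−|x|} pr[{z ⪯ y}] / D_y[{z ⪯ y}] ≥ 0`. -/
theorem generalized_mixing_lemma_iff (m n : ℕ) (hm : 1 ≤ m) (hn : 1 ≤ n)
    (q : Fin n → Fin (m + 1) → ℝ)
    (hq : ∀ (j : Fin n) (i : Fin (m + 1)), i ≠ 0 → 0 < q j i ∧ q j i ≤ 1)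
    (pr : (Fin n → Fin (m + 1)) → ℝ)
    (hpr0 : ∀ z, 0 ≤ pr z) (hpr1 : ∑ z, pr z = 1) :
    pr ∈ convexHull ℝ (Set.range (prodDist q)) ↔
      ∀ x : Fin n → Fin (m + 1),
        0 ≤ ∑ y ∈ Finset.univ.filter (fun y => ∀ j, x j = 0 ∨ x j = y j),
          (-1 : ℝ) ^ (strWt y - strWt x) * cumul pr y / cumul (prodDist q y) y := by
  have hQpos : ∀ y : Str m n, 0 < Qprod q y := Qprod_pos q hq
  have hQne : ∀ y : Str m n, Qprod q y ≠ 0 := fun y => (hQpos y).ne'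
  have hcy : ∀ y : Str m n, cumul (prodDist q y) y = Qprod q y := fun y => by
    rw [cumul_prodDist, if_pos (sle_refl y), one_mul]
  -- rewrite statement sums into Φ form
  have hsum_eq : ∀ x : Str m n,
      (∑ y ∈ Finset.univ.filter (fun y => ∀ j, x j = 0 ∨ x j = y j),
        (-1 : ℝ) ^ (strWt y - strWt x) * cumul pr y / cumul (prodDist q y) y)
      = ∑ y : Str m n, (if sle x y then (-1 : ℝ) ^ (strWt y - strWt x) else 0) *
          (cumul pr y / Qprod q y) := by
    intro x
    rw [Finset.sum_filter]
    refine Finset.sum_congr rfl fun y _ => ?_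
    by_cases h : sle x y
    · rw [if_pos h, if_pos h, hcy y, mul_div_assoc]
    · rw [if_neg h, if_neg h, zero_mul]
  constructor
  · -- forward direction
    intro hmem x
    rw [hsum_eq x]
    rw [_root_.convexHull_eq] at hmem
    obtain ⟨ι, t, wt, zf, hw0, hw1, hzs, hcm⟩ := hmem
    have : ∀ i : ι, ∃ v : Str m n, prodDist q v = zf i ∨ ¬ i ∈ t := by
      intro i
      by_cases hi : i ∈ t
      · obtain ⟨v, hv⟩ := hzs i hi
        exact ⟨v, Or.inl hv⟩
      · exact ⟨fun _ => 0, Or.inr hi⟩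
    choose g hg using this
    have hgz : ∀ i ∈ t, prodDist q (g i) = zf i := by
      intro i hi
      rcases hg i with h | h
      · exact h
      · exact absurd hi h
    have hpr_eq : pr = ∑ i ∈ t, wt i • zf i := by
      rw [← hcm, Finset.centerMass_eq_of_sum_1 t zf hw1]
    have hcum : ∀ y : Str m n, cumul pr y = ∑ i ∈ t, wt i * ((if sle y (g i) then (1:ℝ) else 0) * Qprod q y) := by
      intro y
      rw [cumul_eq]
      have : ∀ z : Str m n, (if sle y z then (1 : ℝ) else 0) * pr z
          = ∑ i ∈ t, wt i * ((if sle y z then (1 : ℝ) else 0) * zf i z) := by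
        intro z
        rw [hpr_eq, Finset.sum_apply, Finset.mul_sum]
        refine Finset.sum_congr rfl fun i _ => ?_
        rw [Pi.smul_apply, smul_eq_mul]; ring
      rw [Finset.sum_congr rfl fun z _ => this z, Finset.sum_comm]
      refine Finset.sum_congr rfl fun i hi => ?_
      rw [← Finset.mul_sum]
      congr 1
      rw [← cumul_eq, ← hgz i hi, cumul_prodDist]
    have hF : ∀ y : Str m n, cumul pr y / Qprod q y
        = ∑ i ∈ t, wt i * (if sle y (g i) then (1 : ℝ) else 0) := by
      intro y
      rw [hcum y]
      rw [Finset.sum_div]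
      refine Finset.sum_congr rfl fun i _ => ?_
      rw [mul_div_assoc, mul_div_assoc, div_self (hQne y), mul_one]
    have : (∑ y : Str m n, (if sle x y then (-1 : ℝ) ^ (strWt y - strWt x) else 0) *
        (cumul pr y / Qprod q y))
        = ∑ i ∈ t, wt i * (if g i = x then (1 : ℝ) else 0) := by
      have step : ∀ y : Str m n,
          (if sle x y then (-1 : ℝ) ^ (strWt y - strWt x) else 0) *
            (cumul pr y / Qprod q y)
          = ∑ i ∈ t, wt i * ((if sle x y then (-1 : ℝ) ^ (strWt y - strWt x) else 0) *
              (if sle y (g i) then (1 : ℝ) else 0)) := by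
        intro y
        rw [hF y, Finset.mul_sum]
        exact Finset.sum_congr rfl fun i _ => by ring
      rw [Finset.sum_congr rfl fun y _ => step y, Finset.sum_comm]
      refine Finset.sum_congr rfl fun i _ => ?_
      rw [← Finset.mul_sum, keyK x (g i)]
    rw [this]
    refine Finset.sum_nonneg fun i hi => ?_
    by_cases h : g i = x
    · rw [if_pos h, mul_one]; exact hw0 i hi
    · rw [if_neg h, mul_zero]
  · -- reverse direction
    intro hpos
    set c : Str m n → ℝ := fun x =>
      ∑ y : Str m n, (if sle x y then (-1 : ℝ) ^ (strWt y - strWt x) else 0) *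
        (cumul pr y / Qprod q y) with hc_def
    have hc0 : ∀ x, 0 ≤ c x := by
      intro x
      have := hpos x
      rwa [hsum_eq x] at this
    have step1 : ∀ y : Str m n,
        ∑ w : Str m n, (if sle y w then (1 : ℝ) else 0) * c w
          = cumul pr y / Qprod q y := by
      intro y
      exact sum_c_formula (fun v => cumul pr v / Qprod q v) y
    set f : Str m n → ℝ := fun z => ∑ x : Str m n, c x * prodDist q x z with hf_def
    have step2 : ∀ y : Str m n, cumul f y = cumul pr y := by
      intro y
      rw [cumul_eq]
      have : ∀ z : Str m n, (if sle y z then (1 : ℝ) else 0) * f z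
          = ∑ x : Str m n, c x * ((if sle y z then (1 : ℝ) else 0) * prodDist q x z) := by
        intro z
        rw [hf_def, Finset.mul_sum]
        exact Finset.sum_congr rfl fun x _ => by ring
      rw [Finset.sum_congr rfl fun z _ => this z, Finset.sum_comm]
      have : ∀ x : Str m n, (∑ z : Str m n, c x * ((if sle y z then (1 : ℝ) else 0) * prodDist q x z))
          = c x * ((if sle y x then (1 : ℝ) else 0) * Qprod q y) := by
        intro x
        rw [← Finset.mul_sum, ← cumul_eq, cumul_prodDist]
      rw [Finset.sum_congr rfl fun x _ => this x]
      have : ∀ x : Str m n, c x * ((if sle y x then (1 : ℝ) else 0) * Qprod q y)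
          = ((if sle y x then (1 : ℝ) else 0) * c x) * Qprod q y := by
        intro x; ring
      rw [Finset.sum_congr rfl fun x _ => this x, ← Finset.sum_mul, step1 y,
        div_mul_cancel₀ _ (hQne y)]
    have step3 : pr = f := by
      funext z0
      have h1 := inv_formula pr z0
      have h2 := inv_formula f z0
      rw [← h1, ← h2]
      exact Finset.sum_congr rfl fun y _ => by rw [step2 y]
    have hsumc : ∑ x : Str m n, c x = 1 := by
      have h0 := step1 (fun _ => (0 : Fin (m + 1)))
      have e1 : ∀ w : Str m n, (if sle (fun _ => (0 : Fin (m+1))) w then (1 : ℝ) else 0) * c w = c w := by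
        intro w; rw [if_pos (sle_zero w), one_mul]
      rw [Finset.sum_congr rfl fun w _ => e1 w] at h0
      rw [h0, cumul_zero_str, hpr1, Qprod_zero, div_one]
    have hmem : Finset.univ.centerMass c (fun x : Str m n => prodDist q x)
        ∈ convexHull ℝ (Set.range (prodDist q)) := by
      refine Finset.centerMass_mem_convexHull Finset.univ (fun i _ => hc0 i) ?_
        (fun i _ => ⟨i, rfl⟩)
      rw [hsumc]; exact one_pos
    have hcm : Finset.univ.centerMass c (fun x : Str m n => prodDist q x) = pr := by
      rw [Finset.centerMass_eq_of_sum_1 _ _ hsumc]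
      funext z0
      rw [step3, hf_def, Finset.sum_apply]
      exact Finset.sum_congr rfl fun x _ => by rw [Pi.smul_apply, smul_eq_mul]
    rwa [hcm] at hmem
end

section
/- If a probability distribution pr on {0,1,…,m}^n lies in the convex hull of the (m+1)^n product distributions {D_w : w ∈ {0,1,…,m}^n}, then for every string x ∈ {0,1,…,m}^n the inequality ∑_{y ⪯ x} (−1)^{|y|−|x|} · pr[{z ⪯ y}] / D_y[{z ⪯ y}] ≥ 0 holds. -/
open Finset

variable {m n : ℕ}

/-- Sum over all strings of a product of per-coordinate factors equals the product of sums. -/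
lemma sum_prod_pi (F : Fin n → Fin (m + 1) → ℝ) :
    ∑ z : Fin n → Fin (m + 1), ∏ j, F j (z j) = ∏ j, ∑ a, F j a := by
  rw [Finset.prod_univ_sum]
  rw [Fintype.piFinset_univ]

lemma cumul_prodDist (q : Fin n → Fin (m + 1) → ℝ) (w y : Fin n → Fin (m + 1)) :
    cumul (prodDist q w) y =
      ∏ j, (if y j = 0 then (1 : ℝ) else if y j = w j ∧ w j ≠ 0 then q j (w j) else 0) := by
  unfold cumul prodDist
  rw [Finset.sum_filter]
  have h1 : ∀ z : Fin n → Fin (m + 1),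
      (if (∀ j, y j = 0 ∨ y j = z j) then
        (∏ j, if w j = 0 then (if z j = 0 then (1 : ℝ) else 0)
          else if z j = w j then q j (w j) else if z j = 0 then 1 - q j (w j) else 0) else 0)
      = ∏ j, (if (y j = 0 ∨ y j = z j) then
          (if w j = 0 then (if z j = 0 then (1 : ℝ) else 0)
            else if z j = w j then q j (w j) else if z j = 0 then 1 - q j (w j) else 0) else 0) := by
    intro z
    rw [Fintype.prod_ite_zero]; convert rfl
  simp only [h1]
  rw [sum_prod_pi fun j a => if y j = 0 ∨ y j = a then
    (if w j = 0 then (if a = 0 then (1:ℝ) else 0)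
      else if a = w j then q j (w j) else if a = 0 then 1 - q j (w j) else 0) else 0]
  refine Finset.prod_congr rfl fun j _ => ?_
  by_cases hy : y j = 0
  · simp only [hy, true_or, if_true]
    by_cases hw : w j = 0
    · simp [hw, Finset.sum_ite_eq' Finset.univ (0 : Fin (m + 1)) (fun _ => (1:ℝ))]
    · have : ∀ a : Fin (m+1), (if a = w j then q j (w j) else if a = 0 then 1 - q j (w j) else 0)
          = (if a = w j then q j (w j) else 0) + (if a = 0 then 1 - q j (w j) else 0) := by
        intro a
        by_cases h1 : a = w j
        · have : ¬ a = 0 := by rw [h1]; exact hw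
          simp [h1, this, hw]
        · simp [h1]
      simp only [hw, if_false, this]
      rw [Finset.sum_add_distrib]
      rw [Finset.sum_ite_eq' Finset.univ (w j), Finset.sum_ite_eq' Finset.univ (0 : Fin (m+1))]
      simp
  · simp only [hy, false_or, if_false]
    have : ∀ a : Fin (m+1), (if y j = a then
        (if w j = 0 then (if a = 0 then (1 : ℝ) else 0)
          else if a = w j then q j (w j) else if a = 0 then 1 - q j (w j) else 0) else 0)
        = if a = y j then (if w j = 0 then (if y j = 0 then (1 : ℝ) else 0)
          else if y j = w j then q j (w j) else if y j = 0 then 1 - q j (w j) else 0) else 0 := by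
      intro a
      by_cases h : a = y j
      · simp [h, eq_comm]
      · have : ¬ y j = a := fun hh => h hh.symm
        simp [h, this]
    simp only [this]
    rw [Finset.sum_ite_eq' Finset.univ (y j)]
    simp only [Finset.mem_univ, if_true]
    by_cases hw : w j = 0
    · have : ¬ (y j = w j ∧ w j ≠ 0) := fun ⟨_, h2⟩ => h2 hw
      simp [hw, hy, this]
    · by_cases h2 : y j = w j
      · simp [hw, h2, hy]
      · simp [hw, h2, hy]

lemma key_nonneg (q : Fin n → Fin (m + 1) → ℝ)
    (hq : ∀ (j : Fin n) (i : Fin (m + 1)), i ≠ 0 → 0 < q j i ∧ q j i ≤ 1)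
    (w x : Fin n → Fin (m + 1)) :
    0 ≤ ∑ y ∈ Finset.univ.filter (fun y => ∀ j, x j = 0 ∨ x j = y j),
      (-1 : ℝ) ^ (strWt y - strWt x) * cumul (prodDist q w) y / cumul (prodDist q y) y := by
  set U : Fin n → Fin (m + 1) → ℝ := fun j a =>
    if x j ≠ 0 then (if a = x j then (if x j = w j then 1 else 0) else 0)
    else (if a = 0 then 1 else if a = w j then -1 else 0) with hU
  have main : ∑ y ∈ Finset.univ.filter (fun y => ∀ j, x j = 0 ∨ x j = y j),
      (-1 : ℝ) ^ (strWt y - strWt x) * cumul (prodDist q w) y / cumul (prodDist q y) y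
      = ∏ j, ∑ a, U j a := by
    rw [Finset.sum_filter, ← sum_prod_pi fun j a => U j a]
    refine Finset.sum_congr rfl fun y _ => ?_
    by_cases hc : ∀ j, x j = 0 ∨ x j = y j
    · rw [if_pos hc]
      -- sign as a product
      have hsub : strWt y - strWt x = (Finset.univ.filter fun j => x j = 0 ∧ y j ≠ 0).card := by
        have hsplit : (Finset.univ.filter fun j => y j ≠ 0)
            = (Finset.univ.filter fun j => x j ≠ 0) ∪
              (Finset.univ.filter fun j => x j = 0 ∧ y j ≠ 0) := by
          ext j
          simp only [Finset.mem_filter, Finset.mem_union, Finset.mem_univ, true_and]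
          constructor
          · intro hyj
            by_cases hxj : x j = 0
            · exact Or.inr ⟨hxj, hyj⟩
            · exact Or.inl hxj
          · rintro (hxj | ⟨_, hyj⟩)
            · rcases hc j with h | h
              · exact absurd h hxj
              · rw [← h]; exact hxj
            · exact hyj
        have hdisj : Disjoint (Finset.univ.filter fun j => x j ≠ 0)
            (Finset.univ.filter fun j => x j = 0 ∧ y j ≠ 0) := by
          rw [Finset.disjoint_filter]
          intro j _ hxj hj
          exact hxj hj.1
        unfold strWt
        rw [hsplit, Finset.card_union_of_disjoint hdisj]
        omega
      have hsign : ((-1 : ℝ)) ^ (strWt y - strWt x)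
          = ∏ j, (if x j = 0 ∧ y j ≠ 0 then (-1 : ℝ) else 1) := by
        rw [hsub, Finset.prod_ite, Finset.prod_const, Finset.prod_const, one_pow, mul_one]
      rw [hsign, cumul_prodDist, cumul_prodDist, ← Finset.prod_mul_distrib,
        ← Finset.prod_div_distrib]
      refine Finset.prod_congr rfl fun j _ => ?_
      rcases hc j with hxj | hxj
      · -- x j = 0
        simp only [hU, hxj, ne_eq, not_true_eq_false, if_false]
        by_cases hyj : y j = 0
        · simp [hyj, hxj]
        · have hqy := (hq j (y j) hyj).1
          by_cases hyw : y j = w j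
          · have hw0 : w j ≠ 0 := fun h => hyj (hyw.trans h)
            simp only [hxj, hyj, hyw, hw0, ne_eq, not_false_eq_true, and_self, if_true,
              if_false, true_and]
            rw [← hyw]
            field_simp
          · simp [hxj, hyj, hyw, hqy.ne']
      · -- x j = y j, x j ≠ 0 case split
        by_cases hx0 : x j = 0
        · -- then y j = x j = 0
          have hyj : y j = 0 := hxj ▸ hx0
          simp [hU, hx0, hyj]
        · have hyj : y j ≠ 0 := fun h => hx0 (hxj.trans h)
          have hyx : y j = x j := hxj.symm
          have hqy := (hq j (y j) hyj).1
          have hns : ¬ (x j = 0 ∧ y j ≠ 0) := fun h => hx0 h.1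
          rw [if_neg hns, one_mul, if_neg hyj, if_neg hyj,
            if_pos (show y j = y j ∧ y j ≠ 0 from ⟨rfl, hyj⟩)]
          by_cases hxw : x j = w j
          · have hyw : y j = w j := hyx.trans hxw
            have hw0 : w j ≠ 0 := fun h => hx0 (hxw.trans h)
            rw [if_pos ⟨hyw, hw0⟩, ← hyw, div_self hqy.ne']
            simp [hU, hx0, hyx, hxw, hw0]
          · have hcc : ¬ (y j = w j ∧ w j ≠ 0) := fun h => hxw (hyx.symm.trans h.1)
            rw [if_neg hcc, zero_div]
            simp [hU, hx0, hyx, hxw]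
    · rw [if_neg hc]
      push_neg at hc
      obtain ⟨j, hxj, hne⟩ := hc
      refine (Finset.prod_eq_zero (Finset.mem_univ j) ?_).symm
      have : ¬ y j = x j := fun h => hne h.symm
      simp [hU, hxj, this]
  rw [main]
  refine Finset.prod_nonneg fun j _ => ?_
  by_cases hxj : x j = 0
  · simp only [hU, hxj, ne_eq, not_true_eq_false, if_false]
    by_cases hw0 : w j = 0
    · have : ∀ a : Fin (m+1), (if a = 0 then (1:ℝ) else if a = w j then -1 else 0)
          = if a = 0 then 1 else 0 := by
        intro a
        by_cases h : a = 0
        · simp [h]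
        · have : a ≠ w j := fun hh => h (hh.trans hw0)
          simp [h, this]
      simp only [this]
      rw [Finset.sum_ite_eq' Finset.univ (0 : Fin (m+1))]
      simp
    · have : ∀ a : Fin (m+1), (if a = 0 then (1:ℝ) else if a = w j then -1 else 0)
          = (if a = 0 then 1 else 0) + (if a = w j then -1 else 0) := by
        intro a
        by_cases h : a = 0
        · subst h
          simp [Ne.symm hw0]
        · simp [h]
      simp only [this]
      rw [Finset.sum_add_distrib, Finset.sum_ite_eq' Finset.univ (0 : Fin (m+1)),
        Finset.sum_ite_eq' Finset.univ (w j)]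
      simp
  · simp only [hU, hxj, ne_eq, not_false_eq_true, if_true]
    rw [Finset.sum_ite_eq' Finset.univ (x j)]
    simp only [Finset.mem_univ, if_true]
    split <;> norm_num

/-- Generalized Mixing Lemma (necessity direction): if a probability distribution `pr`
on `{0,1,…,m}ⁿ` lies in the convex hull of the product distributions `D_w`, then
`∑_{y ⪯ x} (−1)^{|y|−|x|} pr[{z ⪯ y}] / D_y[{z ⪯ y}] ≥ 0` for every string `x`. -/
theorem generalized_mixing_lemma_mp (m n : ℕ) (hm : 1 ≤ m) (hn : 1 ≤ n)
    (q : Fin n → Fin (m + 1) → ℝ)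
    (hq : ∀ (j : Fin n) (i : Fin (m + 1)), i ≠ 0 → 0 < q j i ∧ q j i ≤ 1)
    (pr : (Fin n → Fin (m + 1)) → ℝ)
    (hpr0 : ∀ z, 0 ≤ pr z) (hpr1 : ∑ z, pr z = 1)
    (hhull : pr ∈ convexHull ℝ (Set.range (prodDist q))) :
    ∀ x : Fin n → Fin (m + 1),
      0 ≤ ∑ y ∈ Finset.univ.filter (fun y => ∀ j, x j = 0 ∨ x j = y j),
        (-1 : ℝ) ^ (strWt y - strWt x) * cumul pr y / cumul (prodDist q y) y := by
  intro x
  obtain ⟨ι, inst, t, z, ht0, ht1, hz, hsum⟩ := mem_convexHull_iff_exists_fintype.mp hhull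
  choose g hg using hz
  have hpr' : ∀ z', pr z' = ∑ i, t i * z i z' := by
    intro z'
    rw [← hsum]
    simp [Finset.sum_apply]
  have hcum : ∀ y, cumul pr y = ∑ i, t i * cumul (z i) y := by
    intro y
    unfold cumul
    calc ∑ z' ∈ Finset.univ.filter (fun z' => ∀ j, y j = 0 ∨ y j = z' j), pr z'
        = ∑ z' ∈ Finset.univ.filter (fun z' => ∀ j, y j = 0 ∨ y j = z' j), ∑ i, t i * z i z' :=
          Finset.sum_congr rfl fun z' _ => hpr' z'
      _ = ∑ i, ∑ z' ∈ Finset.univ.filter (fun z' => ∀ j, y j = 0 ∨ y j = z' j), t i * z i z' :=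
          Finset.sum_comm
      _ = _ := by simp [Finset.mul_sum]
  have hsplit : ∑ y ∈ Finset.univ.filter (fun y => ∀ j, x j = 0 ∨ x j = y j),
      (-1 : ℝ) ^ (strWt y - strWt x) * cumul pr y / cumul (prodDist q y) y
      = ∑ i, t i * ∑ y ∈ Finset.univ.filter (fun y => ∀ j, x j = 0 ∨ x j = y j),
        (-1 : ℝ) ^ (strWt y - strWt x) * cumul (z i) y / cumul (prodDist q y) y := by
    simp only [hcum]
    calc ∑ y ∈ Finset.univ.filter (fun y => ∀ j, x j = 0 ∨ x j = y j),
        (-1 : ℝ) ^ (strWt y - strWt x) * (∑ i, t i * cumul (z i) y) / cumul (prodDist q y) y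
        = ∑ y ∈ Finset.univ.filter (fun y => ∀ j, x j = 0 ∨ x j = y j),
          ∑ i, t i * ((-1 : ℝ) ^ (strWt y - strWt x) * cumul (z i) y / cumul (prodDist q y) y) := by
          refine Finset.sum_congr rfl fun y _ => ?_
          rw [Finset.mul_sum, Finset.sum_div]
          exact Finset.sum_congr rfl fun i _ => by ring
      _ = ∑ i, ∑ y ∈ Finset.univ.filter (fun y => ∀ j, x j = 0 ∨ x j = y j),
          t i * ((-1 : ℝ) ^ (strWt y - strWt x) * cumul (z i) y / cumul (prodDist q y) y) :=
          Finset.sum_comm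
      _ = _ := by
          refine Finset.sum_congr rfl fun i _ => ?_
          rw [Finset.mul_sum]
  rw [hsplit]
  refine Finset.sum_nonneg fun i _ => mul_nonneg (ht0 i) ?_
  rw [← hg i]
  exact key_nonneg q hq (g i) x
end

section
/- Suppose L, U : {0,1,…,m}^n → ℝ are such that for every string x ∈ {0,1,…,m}^n one has ∑_{y ⪯ x, |y|−|x| even} L(y)/D_y[{z ⪯ y}] − ∑_{y ⪯ x, |y|−|x| odd} U(y)/D_y[{z ⪯ y}] ≥ 0. Then every probability distribution pr on {0,1,…,m}^n satisfying L(y) ≤ pr[{z ⪯ y}] ≤ U(y) for all strings y lies in the convex hull of the (m+1)^n product distributions {D_w : w ∈ {0,1,…,m}^n}. -/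
open Finset

/-!
The cumulative transform `p ↦ (y ↦ p[{z ⪯ y}])` is inverted by Möbius inversion on the order `⪯`,
whose Möbius function is `(-1)^(|z| - |y|)`: each nonempty interval of `⪯` is a product of
coordinate intervals, each a single point or a two-element chain. For a product distribution,
`D_w[{z ⪯ y}]` is `D_y[{z ⪯ y}]` if `w ⪯ y` and `0` otherwise, so the mixture `∑ c_x D_x` with
`c = μ(y ↦ pr[{z ⪯ y}] / D_y[{z ⪯ y}])` has the same cumulative transform as `pr`, hence equals
`pr`. The hypothesis on `L` and `U` bounds the coefficients `c_x` below by `0`, and evaluating the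
identity `∑_{x ⪯ y} c_x = pr[{z ⪯ y}] / D_y[{z ⪯ y}]` at `y = 0` shows that they sum to `1`.
-/

section SumProd

variable {ι α R : Type*} [Fintype ι] [DecidableEq ι] [Fintype α] [CommSemiring R]

lemma sum_filter_forall_prod (P : ι → α → Prop) [∀ i, DecidablePred (P i)]
    [DecidablePred fun x : ι → α => ∀ i, P i (x i)] (g : ι → α → R) :
    ∑ x ∈ univ.filter (fun x : ι → α => ∀ i, P i (x i)), ∏ i, g i (x i)
      = ∏ i, ∑ a ∈ univ.filter (P i), g i a := by
  simp only [sum_filter, Fintype.prod_sum, prod_ite_zero, mem_univ, true_implies]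

end SumProd

lemma neg_one_pow_sub_of_le {R : Type*} [Monoid R] [HasDistribNeg R] {a b : ℕ} (h : a ≤ b) :
    (-1 : R) ^ (b - a) = (-1) ^ b * (-1) ^ a := by
  obtain ⟨k, rfl⟩ := Nat.exists_eq_add_of_le h
  rw [Nat.add_sub_cancel_left, add_comm a k, pow_add, mul_assoc, ← pow_add, ← two_mul, pow_mul,
    neg_one_sq, one_pow, mul_one]

namespace MixingLemma

variable {m n : ℕ}

def Extends (z y : Fin n → Fin (m + 1)) : Prop := ∀ j, y j = 0 ∨ y j = z j

local infix:50 " ⪯ " => Extends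

instance (z y : Fin n → Fin (m + 1)) : Decidable (z ⪯ y) :=
  inferInstanceAs (Decidable (∀ j, y j = 0 ∨ y j = z j))

lemma extends_zero (x : Fin n → Fin (m + 1)) : x ⪯ 0 := fun _ => Or.inl rfl

lemma Extends.strWt_le {z y : Fin n → Fin (m + 1)} (h : z ⪯ y) : strWt y ≤ strWt z := by
  refine card_le_card fun j => ?_
  simp only [mem_filter, mem_univ, true_and]
  exact fun hy => (h j).resolve_left hy ▸ hy

lemma neg_one_pow_strWt (x : Fin n → Fin (m + 1)) :
    (-1 : ℝ) ^ strWt x = ∏ j, if x j = 0 then 1 else -1 := by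
  rw [strWt, ← prod_const, prod_filter]
  simp only [ite_not]

lemma sum_Icc_neg_one_pow_strWt (w y : Fin n → Fin (m + 1)) :
    ∑ x ∈ univ.filter (fun x => w ⪯ x ∧ x ⪯ y), (-1 : ℝ) ^ strWt x
      = if w = y then (-1) ^ strWt w else 0 := by
  have hcoord : ∀ j, ∑ a ∈ univ.filter (fun a => (a = 0 ∨ a = w j) ∧ (y j = 0 ∨ y j = a)),
      (if a = 0 then (1 : ℝ) else -1) = if w j = y j then (if w j = 0 then 1 else -1) else 0 := by
    intro j
    rcases eq_or_ne (w j) 0 with hw | hw <;> rcases eq_or_ne (y j) 0 with hy | hy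
    · simp [hw, hy, filter_eq']
    · simp [hw, hy, filter_and, filter_eq', filter_eq, Ne.symm hy]
    · simp [hw, hy, filter_or, filter_eq', sum_pair hw.symm]
    · rcases eq_or_ne (w j) (y j) with hwy | hwy
      · simp [hy, hwy, filter_and, filter_or, filter_eq', filter_eq]
      · refine (sum_eq_zero fun a ha => ?_).trans (if_neg hwy).symm
        simp only [mem_filter, mem_univ, true_and, hy, false_or] at ha
        rcases ha with ⟨rfl | rfl, h⟩
        · exact absurd h hy
        · exact absurd h.symm hwy
  simp only [Extends, ← forall_and, neg_one_pow_strWt]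
  rw [sum_filter_forall_prod (fun j a => (a = 0 ∨ a = w j) ∧ (y j = 0 ∨ y j = a))
    (fun _ a => if a = 0 then (1 : ℝ) else -1)]
  simp only [hcoord, prod_ite_zero, mem_univ, true_implies, funext_iff]

lemma sum_neg_one_pow_mul_sum (y : Fin n → Fin (m + 1)) (G : (Fin n → Fin (m + 1)) → ℝ) :
    ∑ x ∈ univ.filter (· ⪯ y), (-1 : ℝ) ^ strWt x * ∑ w ∈ univ.filter (· ⪯ x), G w
      = (-1) ^ strWt y * G y := by
  simp only [mul_sum]
  rw [sum_comm' (t' := univ) (s' := fun w => univ.filter fun x => w ⪯ x ∧ x ⪯ y)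
    (fun x w => by simp only [mem_filter, mem_univ, true_and]; tauto)]
  simp [← sum_mul, sum_Icc_neg_one_pow_strWt, ite_mul]

def moebius (F : (Fin n → Fin (m + 1)) → ℝ) (x : Fin n → Fin (m + 1)) : ℝ :=
  ∑ y ∈ univ.filter (· ⪯ x), (-1 : ℝ) ^ (strWt y - strWt x) * F y

lemma moebius_eq (F : (Fin n → Fin (m + 1)) → ℝ) (x : Fin n → Fin (m + 1)) :
    moebius F x = (-1) ^ strWt x * ∑ y ∈ univ.filter (· ⪯ x), (-1) ^ strWt y * F y := by
  rw [moebius, mul_sum]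
  refine sum_congr rfl fun y hy => ?_
  rw [neg_one_pow_sub_of_le (mem_filter.1 hy).2.strWt_le]
  ring

lemma sum_moebius (F : (Fin n → Fin (m + 1)) → ℝ) (y : Fin n → Fin (m + 1)) :
    ∑ x ∈ univ.filter (· ⪯ y), moebius F x = F y := by
  simp only [moebius_eq, sum_neg_one_pow_mul_sum]
  rw [← mul_assoc, ← pow_add, Even.neg_one_pow ⟨_, rfl⟩, one_mul]

lemma cumul_eq_sum_filter (p : (Fin n → Fin (m + 1)) → ℝ) (y : Fin n → Fin (m + 1)) :
    cumul p y = ∑ z ∈ univ.filter (· ⪯ y), p z := rfl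

lemma moebius_cumul (p : (Fin n → Fin (m + 1)) → ℝ) (x : Fin n → Fin (m + 1)) :
    moebius (cumul p) x = p x := by
  simp only [moebius_eq, cumul_eq_sum_filter, sum_neg_one_pow_mul_sum]
  rw [← mul_assoc, ← pow_add, Even.neg_one_pow ⟨_, rfl⟩, one_mul]

lemma cumul_injective : Function.Injective (cumul : ((Fin n → Fin (m + 1)) → ℝ) → _) :=
  Function.LeftInverse.injective (g := moebius) fun p => funext (moebius_cumul p)

lemma cumul_sum_smul {ι : Type*} (s : Finset ι) (c : ι → ℝ) (p : ι → (Fin n → Fin (m + 1)) → ℝ)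
    (y : Fin n → Fin (m + 1)) : cumul (∑ i ∈ s, c i • p i) y = ∑ i ∈ s, c i * cumul (p i) y := by
  simp only [cumul, Finset.sum_apply, mul_sum]
  exact sum_comm

lemma sub_le_moebius {L U F : (Fin n → Fin (m + 1)) → ℝ} (hL : ∀ y, L y ≤ F y)
    (hU : ∀ y, F y ≤ U y) (x : Fin n → Fin (m + 1)) :
    ∑ y ∈ univ.filter (fun y => y ⪯ x ∧ Even (strWt y - strWt x)), L y
      - ∑ y ∈ univ.filter (fun y => y ⪯ x ∧ Odd (strWt y - strWt x)), U y ≤ moebius F x := by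
  rw [moebius,
    ← sum_filter_add_sum_filter_not (univ.filter (· ⪯ x)) (fun y => Even (strWt y - strWt x)),
    filter_filter, filter_filter, sub_eq_add_neg, ← sum_neg_distrib]
  simp only [Nat.not_even_iff_odd]
  gcongr with y hy y hy
  · rw [(mem_filter.1 hy).2.2.neg_one_pow, one_mul]
    exact hL y
  · rw [(mem_filter.1 hy).2.2.neg_one_pow, neg_one_mul]
    exact neg_le_neg (hU y)

lemma cumul_prodDist (q : Fin n → Fin (m + 1) → ℝ) (w y : Fin n → Fin (m + 1)) :
    cumul (prodDist q w) y = ∏ j, if y j = 0 then 1 else if y j = w j then q j (y j) else 0 := by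
  simp only [cumul, prodDist]
  rw [sum_filter_forall_prod (fun j a => y j = 0 ∨ y j = a) fun j a =>
    if w j = 0 then if a = 0 then 1 else 0
    else if a = w j then q j (w j) else if a = 0 then 1 - q j (w j) else 0]
  refine prod_congr rfl fun j _ => ?_
  rcases eq_or_ne (y j) 0 with hy | hy
  · rcases eq_or_ne (w j) 0 with hw | hw
    · simp [hy, hw]
    · simp only [hy, true_or, filter_true, if_true, hw, if_false]
      rw [Fintype.sum_eq_add (w j) 0 hw (fun a ha => by simp [ha.1, ha.2])]
      simp [hw.symm]
  · rw [show univ.filter (fun a => y j = 0 ∨ y j = a) = {y j} by ext a; simp [hy, eq_comm],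
      sum_singleton]
    split_ifs <;> simp_all

lemma cumul_prodDist_eq_ite (q : Fin n → Fin (m + 1) → ℝ) (w y : Fin n → Fin (m + 1)) :
    cumul (prodDist q w) y = if w ⪯ y then cumul (prodDist q y) y else 0 := by
  simp only [cumul_prodDist]
  split_ifs with h
  · exact prod_congr rfl fun j _ => by rcases h j with hy | hy <;> simp [hy]
  · obtain ⟨j, hj⟩ : ∃ j, ¬(y j = 0 ∨ y j = w j) := by simpa [Extends] using h
    rw [not_or] at hj
    exact prod_eq_zero (mem_univ j) (by simp [hj.1, hj.2])

lemma cumul_prodDist_self_pos {q : Fin n → Fin (m + 1) → ℝ} (hq : ∀ j i, i ≠ 0 → 0 < q j i)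
    (y : Fin n → Fin (m + 1)) : 0 < cumul (prodDist q y) y := by
  rw [cumul_prodDist]
  refine prod_pos fun j _ => ?_
  split_ifs with h₀ h₁
  exacts [one_pos, hq j _ h₀, absurd rfl h₁]

lemma filter_extends_zero : univ.filter (· ⪯ (0 : Fin n → Fin (m + 1))) = univ :=
  filter_true_of_mem fun z _ => extends_zero z

lemma cumul_zero (p : (Fin n → Fin (m + 1)) → ℝ) : cumul p 0 = ∑ z, p z := by
  rw [cumul_eq_sum_filter, filter_extends_zero]

lemma cumul_prodDist_zero (q : Fin n → Fin (m + 1) → ℝ) : cumul (prodDist q 0) 0 = 1 := by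
  simp [cumul_prodDist]

end MixingLemma

open MixingLemma

theorem generalized_mixing_lemma_bounds_general (m n : ℕ)
    (q : Fin n → Fin (m + 1) → ℝ)
    (hq : ∀ (j : Fin n) (i : Fin (m + 1)), i ≠ 0 → 0 < q j i ∧ q j i ≤ 1)
    (L U : (Fin n → Fin (m + 1)) → ℝ)
    (hLU : ∀ x : Fin n → Fin (m + 1),
      0 ≤ (∑ y ∈ Finset.univ.filter
              (fun y => (∀ j, x j = 0 ∨ x j = y j) ∧ Even (strWt y - strWt x)),
            L y / cumul (prodDist q y) y)
         - ∑ y ∈ Finset.univ.filter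
              (fun y => (∀ j, x j = 0 ∨ x j = y j) ∧ Odd (strWt y - strWt x)),
            U y / cumul (prodDist q y) y) :
    ∀ pr : (Fin n → Fin (m + 1)) → ℝ,
      (∀ z, 0 ≤ pr z) → (∑ z, pr z = 1) →
      (∀ y, L y ≤ cumul pr y ∧ cumul pr y ≤ U y) →
      pr ∈ convexHull ℝ (Set.range (prodDist q)) := by
  intro pr _ hpr hprLU
  have hd : ∀ y, 0 < cumul (prodDist q y) y :=
    cumul_prodDist_self_pos fun j i hi => (hq j i hi).1
  set c := moebius fun y => cumul pr y / cumul (prodDist q y) y with hc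
  have hc_nonneg : ∀ x, 0 ≤ c x := fun x => (hLU x).trans <| sub_le_moebius
    (fun y => div_le_div_of_nonneg_right (hprLU y).1 (hd y).le)
    (fun y => div_le_div_of_nonneg_right (hprLU y).2 (hd y).le) x
  have hc_mix : ∑ x, c x • prodDist q x = pr := cumul_injective <| funext fun y => by
    rw [cumul_sum_smul, sum_congr rfl fun x _ => congrArg (c x * ·) (cumul_prodDist_eq_ite q x y)]
    simp only [mul_ite, mul_zero]
    rw [← sum_filter, ← sum_mul, hc, sum_moebius, div_mul_cancel₀ _ (hd y).ne']
  have hc_sum : ∑ x, c x = 1 := by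
    rw [← filter_extends_zero, hc, sum_moebius, cumul_zero, hpr,
      cumul_prodDist_zero, div_one]
  rw [← hc_mix]
  exact (convex_convexHull ℝ _).sum_mem (fun x _ => hc_nonneg x) hc_sum
    fun x _ => subset_convexHull ℝ _ ⟨x, rfl⟩

/-- Generalized Mixing Lemma with upper and lower bounds: if `L, U : {0,1,…,m}ⁿ → ℝ`
satisfy, for every string `x`,
`∑_{y ⪯ x, |y|−|x| even} L(y)/D_y[{z ⪯ y}] − ∑_{y ⪯ x, |y|−|x| odd} U(y)/D_y[{z ⪯ y}] ≥ 0`,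
then every probability distribution `pr` with `L(y) ≤ pr[{z ⪯ y}] ≤ U(y)` for all `y`
lies in the convex hull of the product distributions `D_w`. -/
theorem generalized_mixing_lemma_bounds (m n : ℕ) (hm : 1 ≤ m) (hn : 1 ≤ n)
    (q : Fin n → Fin (m + 1) → ℝ)
    (hq : ∀ (j : Fin n) (i : Fin (m + 1)), i ≠ 0 → 0 < q j i ∧ q j i ≤ 1)
    (L U : (Fin n → Fin (m + 1)) → ℝ)
    (hLU : ∀ x : Fin n → Fin (m + 1),
      0 ≤ (∑ y ∈ Finset.univ.filter
              (fun y => (∀ j, x j = 0 ∨ x j = y j) ∧ Even (strWt y - strWt x)),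
            L y / cumul (prodDist q y) y)
         - ∑ y ∈ Finset.univ.filter
              (fun y => (∀ j, x j = 0 ∨ x j = y j) ∧ Odd (strWt y - strWt x)),
            U y / cumul (prodDist q y) y) :
    ∀ pr : (Fin n → Fin (m + 1)) → ℝ,
      (∀ z, 0 ≤ pr z) → (∑ z, pr z = 1) →
      (∀ y, L y ≤ cumul pr y ∧ cumul pr y ≤ U y) →
      pr ∈ convexHull ℝ (Set.range (prodDist q)) :=
  generalized_mixing_lemma_bounds_general m n q hq L U hLU
end

section
/- Consider the following discrete probability model of preparation purification. Let X₁, X₂, (E₁,E₂), M be independent random variables, where X₁, X₂ ∈ {0,1} with P(X₁ = 1) = a₁ and P(X₂ = 1) = a₂ (preparation errors), M ∈ {0,1} with P(M = 1) = b (measurement error), and (E₁,E₂) ∈ {0,1}² takes each of the four values (0,0), (0,1), (1,0), (1,1) with probability p/4 on CNOT failure and otherwise equals (0,0), i.e. P((E₁,E₂) = e) = p/4 for e ≠ (0,0) and P((E₁,E₂) = (0,0)) = 1 − 3p/4 (the bit-flip action of two-qubit depolarization with failure probability p). Define the measured outcome O = X₁ ⊕ X₂ ⊕ E₂ ⊕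 M and the output error bit W = X₁ ⊕ E₁. Then for every K ≥ 1 there exist constants C > 0 and p₀ > 0 such that for all p ∈ [0, p₀] and all a₁, a₂, b ∈ [0, Kp]: P(O = 0) > 0 and |P(W = 1 | O = 0) − p/4| ≤ C·p². -/
set_option maxHeartbeats 1000000


open MeasureTheory

private lemma sum_zmod2 (f : ZMod 2 → ℝ) : ∑ x : ZMod 2, f x = f 0 + f 1 :=
  Fin.sum_univ_two f

/-- Preparation purification: independent bits `X₁, X₂` (preparation errors, rates
`a₁, a₂`), a CNOT failure pattern `(E₁, E₂)` uniform over the four bit-flip patterns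
with total failure probability `p` (so each pattern `e ≠ (0,0)` has probability `p/4`
and `(0,0)` has probability `1 − 3p/4`), and a measurement error bit `M` (rate `b`).
With measured outcome `O = X₁ + X₂ + E₂ + M` and output error `W = X₁ + E₁` (sums in
`ZMod 2`), for every `K ≥ 1` there are `C > 0` and `p₀ > 0` such that for all
`p ∈ [0, p₀]` and `a₁, a₂, b ∈ [0, K·p]`: `P(O = 0) > 0` and
`|P(W = 1 ∣ O = 0) − p/4| ≤ C·p²`. -/
theorem purification_conditional_error (K : ℝ) (hK : 1 ≤ K) :
    ∃ C > (0 : ℝ), ∃ p₀ > (0 : ℝ), ∀ p a₁ a₂ b : ℝ,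
      0 ≤ p → p ≤ p₀ →
      0 ≤ a₁ → a₁ ≤ K * p → 0 ≤ a₂ → a₂ ≤ K * p → 0 ≤ b → b ≤ K * p →
      ∀ (Ω : Type) (_ : MeasurableSpace Ω) (μ : Measure Ω),
        IsProbabilityMeasure μ →
        ∀ X₁ X₂ E₁ E₂ M : Ω → ZMod 2,
        (∀ x₁ x₂ e₁ e₂ mv : ZMod 2,
          MeasurableSet {ω | X₁ ω = x₁ ∧ X₂ ω = x₂ ∧ E₁ ω = e₁ ∧ E₂ ω = e₂ ∧ M ω = mv}) →
        (∀ x₁ x₂ e₁ e₂ mv : ZMod 2,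
          (μ {ω | X₁ ω = x₁ ∧ X₂ ω = x₂ ∧ E₁ ω = e₁ ∧ E₂ ω = e₂ ∧ M ω = mv}).toReal =
            (if x₁ = 1 then a₁ else 1 - a₁) * (if x₂ = 1 then a₂ else 1 - a₂) *
            (if e₁ = 0 ∧ e₂ = 0 then 1 - 3 * p / 4 else p / 4) *
            (if mv = 1 then b else 1 - b)) →
        0 < (μ {ω | X₁ ω + X₂ ω + E₂ ω + M ω = 0}).toReal ∧
        |(μ {ω | X₁ ω + E₁ ω = 1 ∧ X₁ ω + X₂ ω + E₂ ω + M ω = 0}).toReal /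
            (μ {ω | X₁ ω + X₂ ω + E₂ ω + M ω = 0}).toReal - p / 4| ≤ C * p ^ 2 := by
  refine ⟨6 * K ^ 2, by positivity, 1 / (20 * K), by positivity, ?_⟩
  intro p a₁ a₂ b hp hpp₀ ha₁ ha₁K ha₂ ha₂K hb hbK Ω _ μ hμ X₁ X₂ E₁ E₂ M hmeas hprob
  have key : ∀ (Q : ZMod 2 × ZMod 2 × ZMod 2 × ZMod 2 × ZMod 2 → Prop)
      (_ : DecidablePred Q),
      (μ {ω | Q (X₁ ω, X₂ ω, E₁ ω, E₂ ω, M ω)}).toReal =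
      ∑ u : ZMod 2 × ZMod 2 × ZMod 2 × ZMod 2 × ZMod 2, if Q u then
        (if u.1 = 1 then a₁ else 1 - a₁) * (if u.2.1 = 1 then a₂ else 1 - a₂) *
        (if u.2.2.1 = 0 ∧ u.2.2.2.1 = 0 then 1 - 3 * p / 4 else p / 4) *
        (if u.2.2.2.2 = 1 then b else 1 - b)
      else 0 := by
    intro Q _
    have hset : {ω | Q (X₁ ω, X₂ ω, E₁ ω, E₂ ω, M ω)} =
        ⋃ u ∈ Finset.univ.filter Q,
          {ω | X₁ ω = u.1 ∧ X₂ ω = u.2.1 ∧ E₁ ω = u.2.2.1 ∧ E₂ ω = u.2.2.2.1 ∧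
               M ω = u.2.2.2.2} := by
      ext ω
      simp only [Set.mem_setOf_eq, Set.mem_iUnion, Finset.mem_filter, Finset.mem_univ,
        true_and]
      constructor
      · intro h
        exact ⟨(X₁ ω, X₂ ω, E₁ ω, E₂ ω, M ω), h, rfl, rfl, rfl, rfl, rfl⟩
      · rintro ⟨u, hu, h1, h2, h3, h4, h5⟩
        rw [h1, h2, h3, h4, h5]
        exact hu
    rw [hset, measure_biUnion_finset ?_ (fun u _ => hmeas _ _ _ _ _)]
    · rw [ENNReal.toReal_sum (fun u _ => measure_ne_top μ _)]
      rw [Finset.sum_filter]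
      refine Finset.sum_congr rfl fun u _ => ?_
      split
      · exact hprob _ _ _ _ _
      · rfl
    · intro u _ u' _ huu'
      refine Set.disjoint_left.mpr ?_
      rintro ω ⟨h1, h2, h3, h4, h5⟩ ⟨g1, g2, g3, g4, g5⟩
      apply huu'
      have e1 : u.1 = u'.1 := h1.symm.trans g1
      have e2 : u.2.1 = u'.2.1 := h2.symm.trans g2
      have e3 : u.2.2.1 = u'.2.2.1 := h3.symm.trans g3
      have e4 : u.2.2.2.1 = u'.2.2.2.1 := h4.symm.trans g4
      have e5 : u.2.2.2.2 = u'.2.2.2.2 := h5.symm.trans g5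
      exact Prod.ext e1 (Prod.ext e2 (Prod.ext e3 (Prod.ext e4 e5)))
  have hDval : (μ {ω | X₁ ω + X₂ ω + E₂ ω + M ω = 0}).toReal =
      (1 + (1 - 2 * a₁) * (1 - 2 * a₂) * (1 - p) * (1 - 2 * b)) / 2 := by
    have h := key (fun u => u.1 + u.2.1 + u.2.2.2.1 + u.2.2.2.2 = 0) inferInstance
    rw [show {ω | X₁ ω + X₂ ω + E₂ ω + M ω = 0} =
        {ω | (fun u : ZMod 2 × ZMod 2 × ZMod 2 × ZMod 2 × ZMod 2 =>
          u.1 + u.2.1 + u.2.2.2.1 + u.2.2.2.2 = 0) (X₁ ω, X₂ ω, E₁ ω, E₂ ω, M ω)} from rfl,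
      h]
    simp only [Fintype.sum_prod_type, sum_zmod2]
    norm_num
    simp only [show (2:ZMod 2) = 0 from by decide, show (3:ZMod 2) = 1 from by decide,
      show (4:ZMod 2) = 0 from by decide, if_true, if_false]
    norm_num
    ring
  have hNval : (μ {ω | X₁ ω + E₁ ω = 1 ∧ X₁ ω + X₂ ω + E₂ ω + M ω = 0}).toReal =
      p / 4 + a₁ * (a₂ + b - 2 * a₂ * b) * (1 - p) := by
    have h := key (fun u => u.1 + u.2.2.1 = 1 ∧ u.1 + u.2.1 + u.2.2.2.1 + u.2.2.2.2 = 0)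
      inferInstance
    rw [show {ω | X₁ ω + E₁ ω = 1 ∧ X₁ ω + X₂ ω + E₂ ω + M ω = 0} =
        {ω | (fun u : ZMod 2 × ZMod 2 × ZMod 2 × ZMod 2 × ZMod 2 =>
          u.1 + u.2.2.1 = 1 ∧ u.1 + u.2.1 + u.2.2.2.1 + u.2.2.2.2 = 0)
          (X₁ ω, X₂ ω, E₁ ω, E₂ ω, M ω)} from rfl, h]
    simp only [Fintype.sum_prod_type, sum_zmod2]
    norm_num
    simp only [show (2:ZMod 2) = 0 from by decide, show (3:ZMod 2) = 1 from by decide,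
      show (4:ZMod 2) = 0 from by decide, if_true, if_false]
    norm_num
    ring
  -- numeric bounds
  have hKpos : (0 : ℝ) < K := lt_of_lt_of_le one_pos hK
  have hq : K * p ≤ 1 / 20 := by
    have h1 := mul_le_mul_of_nonneg_left hpp₀ hKpos.le
    have h2 : K * (1 / (20 * K)) = 1 / 20 := by field_simp
    linarith
  have hp1 : p ≤ 1 / 20 := le_trans (le_mul_of_one_le_left hp hK) hq
  have ha₁' : a₁ ≤ 1 / 20 := le_trans ha₁K hq
  have ha₂' : a₂ ≤ 1 / 20 := le_trans ha₂K hq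
  have hb' : b ≤ 1 / 20 := le_trans hbK hq
  set D := (μ {ω | X₁ ω + X₂ ω + E₂ ω + M ω = 0}).toReal with hDdef
  set Nu := (μ {ω | X₁ ω + E₁ ω = 1 ∧ X₁ ω + X₂ ω + E₂ ω + M ω = 0}).toReal with hNdef
  have hprod0 : (0:ℝ) ≤ (1 - 2 * a₁) * (1 - 2 * a₂) * (1 - p) * (1 - 2 * b) := by
    have : (0:ℝ) ≤ 1 - 2 * a₁ := by linarith
    have : (0:ℝ) ≤ 1 - 2 * a₂ := by linarith
    have : (0:ℝ) ≤ 1 - p := by linarith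
    have : (0:ℝ) ≤ 1 - 2 * b := by linarith
    positivity
  have hprod1 : (1 - 2 * a₁) * (1 - 2 * a₂) * (1 - p) * (1 - 2 * b) ≤ 1 := by
    nlinarith [mul_nonneg ha₁ ha₂, mul_nonneg (mul_nonneg ha₁ ha₂) hp,
      mul_nonneg ha₁ hp, mul_nonneg ha₂ hp, mul_nonneg hb hp,
      mul_nonneg ha₁ hb, mul_nonneg ha₂ hb,
      mul_nonneg (mul_nonneg ha₁ ha₂) hb, mul_nonneg (mul_nonneg ha₁ hb) hp,
      mul_nonneg (mul_nonneg ha₂ hb) hp,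
      mul_nonneg (mul_nonneg (mul_nonneg ha₁ ha₂) hb) hp]
  have hDlb : (1 : ℝ) / 2 ≤ D := by rw [hDval]; linarith
  have hDub : D ≤ 1 := by rw [hDval]; linarith
  have hDpos : 0 < D := by linarith
  refine ⟨hDpos, ?_⟩
  have hOneD : 1 - D ≤ 4 * K * p := by
    rw [hDval]
    nlinarith [mul_nonneg ha₁ ha₂, mul_nonneg ha₁ hb, mul_nonneg ha₂ hb,
      mul_nonneg ha₁ hp, mul_nonneg ha₂ hp, mul_nonneg hb hp,
      mul_nonneg (mul_nonneg ha₁ ha₂) hb, mul_nonneg (mul_nonneg ha₁ ha₂) hp,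
      mul_nonneg (mul_nonneg ha₁ hb) hp, mul_nonneg (mul_nonneg ha₂ hb) hp,
      mul_nonneg (mul_nonneg (mul_nonneg ha₁ ha₂) hb) hp]
  have hNum0 : 0 ≤ Nu - p / 4 := by
    rw [hNval]
    nlinarith [mul_nonneg ha₁ ha₂, mul_nonneg ha₁ hb,
      mul_nonneg (mul_nonneg ha₁ ha₂) hb]
  have hNum1 : Nu - p / 4 ≤ 2 * K ^ 2 * p ^ 2 := by
    rw [hNval]
    nlinarith [mul_nonneg ha₁ ha₂, mul_nonneg ha₁ hb,
      mul_nonneg (mul_nonneg ha₁ ha₂) hb, mul_nonneg (mul_nonneg ha₁ ha₂) hp,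
      mul_nonneg (mul_nonneg ha₁ hb) hp,
      mul_nonneg (mul_nonneg (mul_nonneg ha₁ ha₂) hb) hp,
      mul_le_mul ha₁K ha₂K ha₂ (by positivity : (0:ℝ) ≤ K * p),
      mul_le_mul ha₁K hbK hb (by positivity : (0:ℝ) ≤ K * p)]
  have hDne : D ≠ 0 := ne_of_gt hDpos
  have habs : Nu / D - p / 4 = (Nu - p / 4 * D) / D := by field_simp
  have hnn : 0 ≤ Nu - p / 4 * D := by
    nlinarith [mul_nonneg hp (sub_nonneg.mpr hDub)]
  rw [habs, abs_of_nonneg (div_nonneg hnn hDpos.le)]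
  rw [div_le_iff₀ hDpos]
  have h1 : p * (1 - D) ≤ p * (4 * K * p) := mul_le_mul_of_nonneg_left hOneD hp
  have h2 : 6 * K ^ 2 * p ^ 2 * (1 / 2) ≤ 6 * K ^ 2 * p ^ 2 * D :=
    mul_le_mul_of_nonneg_left hDlb (by positivity)
  nlinarith [sq_nonneg p, mul_nonneg (mul_nonneg hp hp) hKpos.le,
    sq_nonneg (K - 1), mul_nonneg (mul_nonneg hp hp) (sub_nonneg.mpr hK)]
end
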